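/- Let 0 < λ < 1 and ν > 0, and let g'_{λ,ν} be the inner product on 𝔤_1 whose matrix in the basis e₀, e₁, e₂ is [[1, λ, 0], [λ, 1, 0], [0, 0, ν]]. Then the matrix of the Ricci form of (𝔤_1, g'_{λ,ν}) in this basis is [[−4λ/((λ+1)ν), −2(λ²+1)/((λ+1)ν), 0], [−2(λ²+1)/((λ+1)ν), 4(λ² − λ − 1)/((λ+1)ν), 0], [0, 0, −4/(λ+1)]], and the only endomorphism of 𝔤_1 skew-symmetric with respect to both g'_{λ,ν} and Ric is 0. -/

import Mathlib

/-!
Tested against the basis, the Koszul formula is a linear system for the coordinates of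
`∇_X Y` with determinant a nonzero multiple of `(λ² − 1) ν`, so `∇` is the explicit map `nabL`,
and the Ricci form follows by direct computation. Up to the factor `(λ + 1) ν` it is
polynomial, and skew-symmetry of `A` for `g'` and for it is a linear system in the entries of
`A`: the upper-left block dies because `λ² ≠ 1`; eliminating `A₂₀, A₂₁` with `g'` leaves a
`2 × 2` system for `A₀₂, A₁₂` of determinant `−(λ + 1)²`, and `g'` then kills the rest.
-/

noncomputable section

open scoped BigOperators

/-- The underlying space of the 3-dimensional Lie algebras under consideration. -/
abbrev V3 : Type := Fin 3 → ℝ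

/-- The standard basis `e₀, e₁, e₂`. -/
def e3 (i : Fin 3) : V3 := Pi.single i 1

/-- The bracket of the Lie algebra `𝔤_c`:
`[e₀,e₁] = 0`, `[e₂,e₀] = e₁`, `[e₂,e₁] = −c e₀ + 2 e₁`, extended bilinearly. -/
def braC (c : ℝ) (x y : V3) : V3 :=
  ![-c * (x 2 * y 1 - y 2 * x 1),
    (x 2 * y 0 - y 2 * x 0) + 2 * (x 2 * y 1 - y 2 * x 1),
    0]

/-- The inner product `g'_{λ,ν}` on `𝔤_1`, with matrix `[[1,λ,0],[λ,1,0],[0,0,ν]]`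
in the basis `e₀,e₁,e₂`. -/
def gL (lam ν : ℝ) (x y : V3) : ℝ :=
  x 0 * y 0 + lam * (x 0 * y 1 + x 1 * y 0) + x 1 * y 1 + ν * (x 2 * y 2)

/-- The curvature tensor `R(X,Y)Z = ∇_X ∇_Y Z − ∇_Y ∇_X Z − ∇_{[X,Y]} Z`. -/
def Rc (br nab : V3 → V3 → V3) (X Y Z : V3) : V3 :=
  nab X (nab Y Z) - nab Y (nab X Z) - nab (br X Y) Z

/-- The Ricci form `Ric(X,Y) = tr (Z ↦ R(Z,X)Y)`. -/
def RicF (br nab : V3 → V3 → V3) (X Y : V3) : ℝ :=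
  ∑ k : Fin 3, Rc br nab (e3 k) X Y k

def nabL (lam ν : ℝ) (x y : V3) : V3 :=
  ![(-lam * (x 0 * y 2 + x 2 * y 0) + lam * (x 1 * y 2) - x 2 * y 1) / (lam + 1),
    (-lam * (x 0 * y 2) + x 2 * y 0 - (lam + 2) * (x 1 * y 2) + lam * (x 2 * y 1)) / (lam + 1),
    (lam * (x 0 * y 0 + x 0 * y 1 + x 1 * y 0) + (2 - lam) * (x 1 * y 1)) / ν]

def ricPoly (lam ν : ℝ) (v w : V3) : ℝ :=
  -4 * lam * (v 0 * w 0) - 2 * (lam ^ 2 + 1) * (v 0 * w 1 + v 1 * w 0)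
    + 4 * (lam ^ 2 - lam - 1) * (v 1 * w 1) - 4 * ν * (v 2 * w 2)

section

variable {lam ν : ℝ}

lemma e3_apply (i k : Fin 3) : e3 i k = if k = i then 1 else 0 := by
  simp [e3, Pi.single_apply]

theorem nab_eq_nabL (hadd : lam + 1 ≠ 0) (hsub : lam - 1 ≠ 0) (hν : ν ≠ 0)
    {nab : V3 → V3 → V3}
    (hK : ∀ X Y Z : V3, 2 * gL lam ν (nab X Y) Z =
      gL lam ν (braC 1 X Y) Z - gL lam ν (braC 1 Y Z) X + gL lam ν (braC 1 Z X) Y) :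
    nab = nabL lam ν := by
  funext x y
  have h0 := hK x y (e3 0)
  have h1 := hK x y (e3 1)
  have h2 := hK x y (e3 2)
  simp only [gL, Fin.isValue, e3_apply, ↓reduceIte, mul_one, one_ne_zero, mul_zero, zero_add,
    add_zero, Fin.reduceEq, braC, neg_mul, one_mul, neg_sub, Matrix.cons_val_zero,
    Matrix.cons_val_one, Matrix.cons_val, zero_mul, sub_self, sub_zero, zero_sub, mul_neg,
    zero_ne_one, neg_neg, neg_add_rev] at h0 h1 h2
  have hdet : 2 * (lam - 1) ≠ 0 := mul_ne_zero two_ne_zero hsub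
  ext i
  fin_cases i <;> simp only [nabL, Fin.zero_eta, Fin.mk_one, Fin.reduceFinMk, Fin.isValue,
    Matrix.cons_val_zero, Matrix.cons_val_one, Matrix.cons_val_two, Matrix.tail_cons,
    Matrix.head_cons]
  · rw [eq_div_iff hadd]
    refine mul_left_cancel₀ hdet ?_
    linear_combination -h0 + lam * h1
  · rw [eq_div_iff hadd]
    refine mul_left_cancel₀ hdet ?_
    linear_combination -h1 + lam * h0
  · rw [eq_div_iff hν]
    linear_combination h2 / 2

theorem ricF_nabL (hadd : lam + 1 ≠ 0) (hν : ν ≠ 0) (v w : V3) :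
    RicF (braC 1) (nabL lam ν) v w = ricPoly lam ν v w / ((lam + 1) * ν) := by
  simp only [RicF, Rc, Fin.sum_univ_three, nabL, Fin.isValue, e3_apply, ↓reduceIte, neg_mul, Matrix.cons_val, one_mul,
    Fin.reduceEq, Matrix.cons_val_zero, zero_mul, add_zero, one_ne_zero, mul_zero,
    Matrix.cons_val_one, sub_zero, Matrix.sub_cons, Matrix.head_cons, Matrix.tail_cons, sub_self,
    Matrix.zero_empty, braC, mul_one, zero_sub, mul_neg, zero_add, sub_neg_eq_add, Pi.sub_apply,
    zero_ne_one, neg_neg, zero_div, ricPoly]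
  field_simp
  ring

theorem ricPoly_e3_div (hν : ν ≠ 0) (i j : Fin 3) :
    ricPoly lam ν (e3 i) (e3 j) / ((lam + 1) * ν) =
      !![-4*lam/((lam+1)*ν), -2*(lam^2+1)/((lam+1)*ν), 0;
         -2*(lam^2+1)/((lam+1)*ν), 4*(lam^2 - lam - 1)/((lam+1)*ν), 0;
         0, 0, -4/(lam+1)] i j := by
  fin_cases i <;> fin_cases j <;> simp [ricPoly, e3_apply]
  field_simp

theorem eq_zero_of_skew_gL_ricPoly (hadd : lam + 1 ≠ 0) (hsub : lam - 1 ≠ 0) (hν : ν ≠ 0)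
    (A : Module.End ℝ V3)
    (hg : ∀ x y : V3, gL lam ν (A x) y + gL lam ν x (A y) = 0)
    (hr : ∀ x y : V3, ricPoly lam ν (A x) y + ricPoly lam ν x (A y) = 0) :
    A = 0 := by
  have g00 := hg (e3 0) (e3 0)
  have g01 := hg (e3 0) (e3 1)
  have g02 := hg (e3 0) (e3 2)
  have g11 := hg (e3 1) (e3 1)
  have g12 := hg (e3 1) (e3 2)
  have g22 := hg (e3 2) (e3 2)
  have r00 := hr (e3 0) (e3 0)
  have r02 := hr (e3 0) (e3 2)
  have r12 := hr (e3 1) (e3 2)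
  simp only [gL, ricPoly, Fin.isValue, e3_apply, ↓reduceIte, Fin.reduceEq, one_ne_zero,
    zero_ne_one, mul_one, mul_zero, one_mul, zero_mul, zero_add, add_zero, neg_mul, sub_zero,
    sub_self, zero_sub, add_self_eq_zero, mul_eq_zero] at g00 g01 g02 g11 g12 g22 r00 r02 r12
  have hsq : (lam - 1) * (lam + 1) ≠ 0 := mul_ne_zero hsub hadd
  have ha10 : A (e3 0) 1 = 0 :=
    eq_zero_of_ne_zero_of_mul_left_eq_zero (mul_ne_zero two_ne_zero hsq)
      (by linear_combination r00 + 4 * lam * g00)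
  have ha00 : A (e3 0) 0 = 0 := by linear_combination g00 - lam * ha10
  have ha11 : A (e3 1) 1 = 0 :=
    eq_zero_of_ne_zero_of_mul_left_eq_zero hsq
      (by linear_combination lam * g01 - g11 - lam ^ 2 * ha00 - lam * ha10)
  have ha01 : A (e3 1) 0 = 0 := by linear_combination g01 - lam * ha00 - ha10 - lam * ha11
  have hc : 2 * (lam - 1) * (lam + 1) ^ 2 ≠ 0 := by simp [hsub, hadd]
  have ha12 : A (e3 2) 1 = 0 :=
    eq_zero_of_ne_zero_of_mul_left_eq_zero hc
      (by linear_combination (1 - lam) * (r02 + 4 * g02) + 2 * (r12 + 4 * g12))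
  have ha02 : A (e3 2) 0 = 0 :=
    eq_zero_of_ne_zero_of_mul_left_eq_zero hc
      (by linear_combination -2 * lam * (r02 + 4 * g02) + (1 - lam) * (r12 + 4 * g12))
  have ha20 : A (e3 0) 2 = 0 :=
    eq_zero_of_ne_zero_of_mul_left_eq_zero hν (by linear_combination g02 - ha02 - lam * ha12)
  have ha21 : A (e3 1) 2 = 0 :=
    eq_zero_of_ne_zero_of_mul_left_eq_zero hν (by linear_combination g12 - lam * ha02 - ha12)
  have ha22 : A (e3 2) 2 = 0 := g22.resolve_left hν
  have hcol : ∀ j, A (e3 j) = 0 := by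
    intro j
    ext k
    fin_cases j <;> fin_cases k <;> assumption
  exact (Pi.basisFun ℝ (Fin 3)).ext fun j => by simpa [e3] using hcol j

end

/-- the Ricci form of `(𝔤_1, g'_{λ,ν})` has the stated matrix in the
basis `e₀, e₁, e₂`, and the only endomorphism of `𝔤_1` skew-symmetric with respect to
both `g'_{λ,ν}` and `Ric` is `0`. -/
theorem stmt9 (lam ν : ℝ) (hlam0 : 0 < lam) (hlam1 : lam < 1) (hν : 0 < ν)
    (nab : V3 → V3 → V3)
    (hK : ∀ X Y Z : V3, 2 * gL lam ν (nab X Y) Z =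
      gL lam ν (braC 1 X Y) Z - gL lam ν (braC 1 Y Z) X + gL lam ν (braC 1 Z X) Y) :
    (∀ i j : Fin 3, RicF (braC 1) nab (e3 i) (e3 j) =
      !![-4*lam/((lam+1)*ν), -2*(lam^2+1)/((lam+1)*ν), 0;
         -2*(lam^2+1)/((lam+1)*ν), 4*(lam^2 - lam - 1)/((lam+1)*ν), 0;
         0, 0, -4/(lam+1)] i j) ∧
    (∀ A : Module.End ℝ V3,
      (∀ x y : V3, gL lam ν (A x) y + gL lam ν x (A y) = 0) →
      (∀ x y : V3, RicF (braC 1) nab (A x) y + RicF (braC 1) nab x (A y) = 0) →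
      A = 0) := by
  have hadd : lam + 1 ≠ 0 := by positivity
  have hsub : lam - 1 ≠ 0 := sub_ne_zero.2 hlam1.ne
  obtain rfl : nab = nabL lam ν := nab_eq_nabL hadd hsub hν.ne' hK
  have hRic := ricF_nabL hadd hν.ne'
  refine ⟨fun i j => by rw [hRic, ricPoly_e3_div hν.ne'], fun A hg hr => ?_⟩
  refine eq_zero_of_skew_gL_ricPoly hadd hsub hν.ne' A hg fun x y => ?_
  have hxy := hr x y
  rwa [hRic, hRic, ← add_div, div_eq_zero_iff, or_iff_left (mul_ne_zero hadd hν.ne')]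
    at hxy
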